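/- arXiv:1301.7148 — 5 statements merged into one kernel-verified Lean document; each statement's English description precedes it below -/
import Mathlib

section
/- For any two Borel probability measures μ and ν on ℝ, there exist probability spaces (Ω₁, F₁, P₁) and (Ω₂, F₂, P₂), uniformly distributed random variables X : Ω₁ → [0,1] and Y : Ω₂ → [0,1], and a single function h : [0,1] → ℝ such that h ∘ X is measurable with law μ (i.e., the pushforward of P₁ under h ∘ X equals μ) and h ∘ Y is measurable with law ν. -/
/-!
Choose a `ℚ`-linear `φ : ℝ → ℚ` with `φ 1 = 1` and let `A = {x | ⌊φ x⌋ is even}`. Translation by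
any `t` with `φ t = 1` swaps `A` and `Aᶜ`, and such `t` are dense, so by Steinhaus' theorem neither
`A` nor `Aᶜ` contains a measurable set of positive measure. Hence Lebesgue measure on `[0,1]` lifts
to a probability measure on `A ∩ [0,1]` and on `Aᶜ ∩ [0,1]`, making both inclusions uniform random
variables `X`, `Y`. If measurable `f`, `g` push the uniform law to `μ`, `ν`, then `h = f` on `A` and
`h = g` off `A` does the job.
-/

open MeasureTheory Set

/-- `X : Ω → ℝ` is a uniformly distributed random variable with values in `[0,1]`:
it is measurable, takes values in `[0,1]`, and its law is Lebesgue measure on `[0,1]`. -/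
def IsUniformOn01 {Ω : Type*} [MeasurableSpace Ω] (P : Measure Ω) (X : Ω → ℝ) : Prop :=
  Measurable X ∧ Set.range X ⊆ Set.Icc 0 1 ∧
    P.map X = volume.restrict (Set.Icc (0 : ℝ) 1)

namespace MeasureTheory.Measure

section FullOuterMeasure

variable {α : Type*} [MeasurableSpace α] {μ : Measure α} {s : Set α}

theorem restrict_eq_self_of_forall_measure_eq_zero [SFinite μ]
    (h : ∀ t, MeasurableSet t → t ⊆ sᶜ → μ t = 0) : μ.restrict s = μ := by
  rw [← restrict_toMeasurable_of_sFinite]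
  exact restrict_eq_self_of_ae_mem <| h _ (measurableSet_toMeasurable μ s).compl
    (compl_subset_compl.2 (subset_toMeasurable μ s))

-- For non-measurable `s`, `μ.restrict s = μ` says that `s` has full outer measure.
theorem exists_map_subtype_val_eq (hs : μ.restrict s = μ) :
    ∃ P : Measure s, P.map Subtype.val = μ := by
  set m := μ.toOuterMeasure.comap ((↑) : s → α)
  have hm : ∀ t, m t = μ ((↑) '' t) := fun t ↦ OuterMeasure.comap_apply _ _ _
  have hcarath : (inferInstance : MeasurableSpace s) ≤ m.caratheodory := by
    rintro _ ⟨B, hB, rfl⟩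
    refine m.isCaratheodory_iff.2 fun t ↦ ?_
    rw [hm, hm, hm, image_inter_preimage, image_sdiff_preimage, measure_inter_add_sdiff _ hB]
  refine ⟨m.toMeasure hcarath, ext fun B hB ↦ ?_⟩
  rw [map_apply measurable_subtype_coe hB, toMeasure_apply _ _ (measurable_subtype_coe hB), hm,
    Subtype.image_preimage_coe, inter_comm, ← restrict_apply hB, hs]

end FullOuterMeasure

section Steinhaus

variable {G : Type*} [AddGroup G] [TopologicalSpace G] [IsTopologicalAddGroup G]
  [LocallyCompactSpace G] [MeasurableSpace G] [BorelSpace G]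
  (μ : Measure G) [μ.IsAddHaarMeasure] [μ.InnerRegular] {D : Set G}

theorem measure_eq_zero_of_sub_notMem_dense {E : Set G} (hE : MeasurableSet E) (hD : Dense D)
    (h : ∀ x ∈ E, ∀ y ∈ E, x - y ∉ D) : μ E = 0 := by
  by_contra hE0
  obtain ⟨_, hd, x, hx, y, hy, rfl⟩ :=
    hD.inter_nhds_nonempty (sub_mem_nhds_zero_of_addHaar_pos μ E hE (pos_iff_ne_zero.2 hE0))
  exact h x hx y hy hd

theorem restrict_eq_self_of_sub_mem_dense [SFinite μ] {T : Set G} (hD : Dense D)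
    (hT : ∀ x y, x - y ∈ D → (x ∈ T ↔ y ∉ T)) : μ.restrict T = μ := by
  refine restrict_eq_self_of_forall_measure_eq_zero fun E hE hET ↦ ?_
  exact measure_eq_zero_of_sub_notMem_dense μ hE hD fun x hx y hy hxy ↦
    hET hx ((hT x y hxy).2 (hET hy))

end Steinhaus

end MeasureTheory.Measure

theorem exists_linearMap_rat_apply_one : ∃ φ : ℝ →ₗ[ℚ] ℚ, φ 1 = 1 := by
  obtain ⟨φ, hφ⟩ := Module.exists_dual_forall_apply_eq_one
    ((linearIndepOn_singleton_iff ℚ).2 one_ne_zero : LinearIndepOn ℚ id {(1 : ℝ)})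
  exact ⟨φ, hφ 1 rfl⟩

theorem dense_setOf_apply_eq_one {φ : ℝ →ₗ[ℚ] ℚ} (hφ : φ 1 = 1) : Dense {t | φ t = 1} := by
  obtain ⟨z, hz, hφz⟩ : ∃ z ≠ 0, φ z = 0 := by
    by_contra! h
    exact Cardinal.not_countable_real <| countable_univ_iff.2 <|
      ((injective_iff_map_eq_zero φ).2 fun z hz ↦ by_contra fun hz0 ↦ h z hz0 hz).countable
  have hdense : DenseRange fun q : ℚ ↦ (q : ℝ) * z + 1 :=
    ((Homeomorph.mulRight₀ z hz).trans (Homeomorph.addRight 1)).surjective.denseRange.comp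
      Rat.denseRange_cast (by fun_prop)
  refine hdense.mono ?_
  rintro _ ⟨q, rfl⟩
  simp [← Rat.smul_def, hφz, hφ]

theorem even_floor_apply_iff_of_apply_sub_eq_one {φ : ℝ →ₗ[ℚ] ℚ} {x y : ℝ}
    (h : φ (x - y) = 1) : Even ⌊φ x⌋ ↔ ¬Even ⌊φ y⌋ := by
  rw [map_sub, sub_eq_iff_eq_add'] at h
  rw [h, Int.floor_add_one, Int.even_add_one]

theorem exists_measurable_map_restrict_Icc_eq {Y : Type*} [MeasurableSpace Y]
    [StandardBorelSpace Y] [Nonempty Y] (μ : Measure Y) [IsProbabilityMeasure μ] :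
    ∃ f : ℝ → Y, Measurable f ∧ (volume.restrict (Icc (0 : ℝ) 1)).map f = μ := by
  obtain ⟨f, hf, hfμ⟩ := Measure.exists_measurable_map_eq μ
  refine ⟨f ∘ projIcc 0 1 zero_le_one, hf.comp continuous_projIcc.measurable, ?_⟩
  rw [← map_comap_subtype_coe measurableSet_Icc,
    Measure.map_map (hf.comp continuous_projIcc.measurable) measurable_subtype_coe]
  simp only [Function.comp_def, projIcc_val]
  exact hfμ

theorem exists_isUniformOn01_forall_mem {A : Set ℝ} (hA : volume.restrict A = volume) :
    ∃ (Ω : Type) (_ : MeasurableSpace Ω) (P : Measure Ω) (X : Ω → ℝ),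
      IsProbabilityMeasure P ∧ IsUniformOn01 P X ∧ ∀ ω, X ω ∈ A := by
  have hfull : (volume.restrict (Icc (0 : ℝ) 1)).restrict (A ∩ Icc 0 1) =
      volume.restrict (Icc 0 1) := by
    rw [Measure.restrict_restrict' measurableSet_Icc, inter_assoc, inter_self, inter_comm,
      ← Measure.restrict_restrict measurableSet_Icc, hA]
  obtain ⟨P, hP⟩ := Measure.exists_map_subtype_val_eq hfull
  have : IsProbabilityMeasure (P.map Subtype.val) := by rw [hP]; exact ⟨by simp⟩
  refine ⟨↥(A ∩ Icc 0 1), inferInstance, P, Subtype.val, P.isProbabilityMeasure_of_map Subtype.val,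
    ⟨measurable_subtype_coe, ?_, hP⟩, fun ω ↦ ω.2.1⟩
  rw [Subtype.range_coe]
  exact inter_subset_right

theorem IsUniformOn01.map_comp {Ω : Type*} [MeasurableSpace Ω] {P : Measure Ω} {X : Ω → ℝ}
    (hX : IsUniformOn01 P X) {f : ℝ → ℝ} (hf : Measurable f) :
    P.map (f ∘ X) = (volume.restrict (Icc (0 : ℝ) 1)).map f := by
  rw [← Measure.map_map hf hX.1, hX.2.2]

/-- For any two Borel probability measures `μ`, `ν` on `ℝ` there are
uniformly distributed random variables `X`, `Y` (on possibly different probability spaces)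
and a single function `h` on `[0,1]` such that `h ∘ X` is measurable with law `μ` and
`h ∘ Y` is measurable with law `ν`. -/
theorem stmt_0 (μ ν : Measure ℝ) [IsProbabilityMeasure μ] [IsProbabilityMeasure ν] :
    ∃ (Ω₁ Ω₂ : Type) (_ : MeasurableSpace Ω₁) (_ : MeasurableSpace Ω₂)
      (P₁ : Measure Ω₁) (P₂ : Measure Ω₂),
      IsProbabilityMeasure P₁ ∧ IsProbabilityMeasure P₂ ∧
      ∃ (X : Ω₁ → ℝ) (Y : Ω₂ → ℝ) (h : ℝ → ℝ),
        IsUniformOn01 P₁ X ∧ IsUniformOn01 P₂ Y ∧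
        Measurable (h ∘ X) ∧ P₁.map (h ∘ X) = μ ∧
        Measurable (h ∘ Y) ∧ P₂.map (h ∘ Y) = ν := by
  obtain ⟨φ, hφ⟩ := exists_linearMap_rat_apply_one
  set A : Set ℝ := {x | Even ⌊φ x⌋}
  have hswap : ∀ x y, x - y ∈ {t | φ t = 1} → (x ∈ A ↔ y ∉ A) :=
    fun _ _ ↦ even_floor_apply_iff_of_apply_sub_eq_one
  have hA := volume.restrict_eq_self_of_sub_mem_dense (dense_setOf_apply_eq_one hφ) hswap
  have hAc := volume.restrict_eq_self_of_sub_mem_dense (T := Aᶜ) (dense_setOf_apply_eq_one hφ)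
    fun x y hxy ↦ (hswap x y hxy).not
  obtain ⟨Ω₁, _, P₁, X, hP₁, hX, hXA⟩ := exists_isUniformOn01_forall_mem hA
  obtain ⟨Ω₂, _, P₂, Y, hP₂, hY, hYA⟩ := exists_isUniformOn01_forall_mem hAc
  obtain ⟨f, hf, rfl⟩ := exists_measurable_map_restrict_Icc_eq μ
  obtain ⟨g, hg, rfl⟩ := exists_measurable_map_restrict_Icc_eq ν
  have hfX : A.piecewise f g ∘ X = f ∘ X := funext fun ω ↦ piecewise_eq_of_mem _ _ _ (hXA ω)
  have hgY : A.piecewise f g ∘ Y = g ∘ Y := funext fun ω ↦ piecewise_eq_of_notMem _ _ _ (hYA ω)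
  refine ⟨Ω₁, Ω₂, _, _, P₁, P₂, hP₁, hP₂, X, Y, A.piecewise f g, hX, hY, ?_⟩
  rw [hfX, hgY]
  exact ⟨hf.comp hX.1, hX.map_comp hf, hg.comp hY.1, hY.map_comp hg⟩
end

section
/- Let I be an index set whose cardinality is at most that of the continuum. Then there exists a family of probability spaces (Ω_α, F_α, P_α)_{α ∈ I} and uniformly distributed random variables X_α : Ω_α → [0,1] such that the ranges are pairwise disjoint: X_α(Ω_α) ∩ X_β(Ω_β) = ∅ whenever α ≠ β. -/
/-!
Let `J` be the family of measurable subsets of `[0,1]` of positive measure. There are at most `𝔠`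
of them, and each has exactly `𝔠` points, being an uncountable Borel set. Choosing, by transfinite
recursion along an initial well-order of `J × I`, pairwise distinct points `x (E, α) ∈ E`, the
sets `S α = {x (E, α) | E ∈ J}` are pairwise disjoint and each meets every set of positive measure
in `[0,1]`. Such an `S α` has full outer measure in `[0,1]`, so the trace of Lebesgue measure on
`S α` is a probability measure under which the inclusion `S α → [0,1]` is uniformly distributed.
-/

open MeasureTheory Set

open Cardinal Function

universe u

theorem exists_injective_forall_mem_of_mk_Iio_lt {O α : Type u} [LinearOrder O] [WellFoundedLT O]
    (A : O → Set α) (hA : ∀ x, #(Iio x) < #(A x)) :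
    ∃ f : O → α, Injective f ∧ ∀ x, f x ∈ A x := by
  have fresh : ∀ (x : O) (p : Iio x → α), (A x \ range p).Nonempty := fun x p ↦
    nonempty_of_not_subset fun hsub ↦
      ((mk_le_mk_of_subset hsub).trans mk_range_le).not_gt (hA x)
  let f : O → α := wellFounded_lt.fix fun x ih ↦ (fresh x fun y ↦ ih y y.2).choose
  have hf : ∀ x, f x ∈ A x \ range (fun y : Iio x ↦ f y) := fun x ↦ by
    rw [show f x = _ from wellFounded_lt.fix_eq _ x]
    exact (fresh x _).choose_spec
  refine ⟨f, fun x y hxy ↦ ?_, fun x ↦ (hf x).1⟩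
  by_contra hne
  rcases lt_or_gt_of_ne hne with h | h
  · exact (hf y).2 ⟨⟨x, h⟩, hxy⟩
  · exact (hf x).2 ⟨⟨y, h⟩, hxy.symm⟩

theorem exists_injective_forall_mem {J α : Type u} (A : J → Set α) (hA : ∀ j, #J ≤ #(A j)) :
    ∃ f : J → α, Injective f ∧ ∀ j, f j ∈ A j := by
  obtain ⟨e⟩ : Nonempty (J ≃ (#J).ord.ToType) := by
    rw [← Cardinal.eq, mk_toType, card_ord]
  obtain ⟨g, hg, hgA⟩ := exists_injective_forall_mem_of_mk_Iio_lt (fun x ↦ A (e.symm x))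
    fun x ↦ (by simpa using mk_Iio_lt x : #(Iio x) < #J).trans_le (hA _)
  exact ⟨g ∘ e, hg.comp e.injective, fun j ↦ by simpa using hgA (e j)⟩

theorem exists_pairwise_disjoint_forall_inter_nonempty {ι J α : Type u} (A : J → Set α)
    (hA : ∀ j, #(J × ι) ≤ #(A j)) :
    ∃ S : ι → Set α, Pairwise (Disjoint on S) ∧ (∀ i, S i ⊆ ⋃ j, A j) ∧
      ∀ i j, (S i ∩ A j).Nonempty := by
  obtain ⟨f, hf, hfA⟩ := exists_injective_forall_mem (fun p : J × ι ↦ A p.1) fun p ↦ hA p.1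
  refine ⟨fun i ↦ range fun j ↦ f (j, i), fun i i' hii' ↦ ?_, ?_,
    fun i j ↦ ⟨f (j, i), ⟨j, rfl⟩, hfA (j, i)⟩⟩
  · rw [onFun, disjoint_iff_forall_ne]
    rintro _ ⟨j, rfl⟩ _ ⟨j', rfl⟩ h
    exact hii' (congrArg Prod.snd (hf h))
  · rintro i _ ⟨j, rfl⟩
    exact mem_iUnion_of_mem j (hfA (j, i))

theorem MeasurableSpace.mk_setOf_measurableSet_le_continuum (α : Type u) [MeasurableSpace α]
    [MeasurableSpace.CountablyGenerated α] : #{s : Set α | MeasurableSet s} ≤ 𝔠 := by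
  obtain ⟨b, hb, hgen⟩ := MeasurableSpace.CountablyGenerated.isCountablyGenerated (α := α)
  rw [hgen]
  exact MeasurableSpace.cardinal_measurableSet_le_continuum
    ((mk_le_aleph0_iff.2 hb.to_subtype).trans aleph0_le_continuum)

theorem MeasurableSet.continuum_le_mk_of_measure_pos {α : Type u} [MeasurableSpace α]
    [StandardBorelSpace α] {μ : Measure α} [NullSingletonClass μ] {s : Set α}
    (hs : MeasurableSet s) (hμs : 0 < μ s) : 𝔠 ≤ #s := by
  have := hs.standardBorel
  have hunc : ¬Countable s := fun h ↦ hμs.ne' ((countable_coe_iff.1 h).measure_zero μ)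
  simpa using (lift_mk_eq'.2 ⟨(PolishSpace.measurableEquivNatBoolOfNotCountable hunc).toEquiv⟩).ge

theorem Measure.restrict_eq_self_of_forall_inter_nonempty {α : Type*} [MeasurableSpace α]
    {μ : Measure α} [SFinite μ] {s : Set α}
    (hs : ∀ t, MeasurableSet t → 0 < μ t → (s ∩ t).Nonempty) : μ.restrict s = μ := by
  rw [← Measure.restrict_toMeasurable_of_sFinite]
  refine Measure.restrict_eq_self_of_ae_mem (ae_iff.2 ?_)
  by_contra h
  obtain ⟨x, hxs, hx⟩ := hs _ (measurableSet_toMeasurable μ s).compl (pos_iff_ne_zero.2 h)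
  exact hx (subset_toMeasurable μ s hxs)

theorem Measure.exists_map_subtype_val_eq_restrict {α : Type*} [MeasurableSpace α]
    (μ : Measure α) (s : Set α) :
    ∃ ν : Measure s, ν.map Subtype.val = μ.restrict s := by
  -- `μ.comap Subtype.val` would not do: it is `0` unless `s` is null-measurable.
  let ν : OuterMeasure s := OuterMeasure.comap Subtype.val μ.toOuterMeasure
  have hν : ∀ t, ν t = μ (Subtype.val '' t) := fun t ↦ OuterMeasure.comap_apply _ _ _
  have hcarat : (inferInstance : MeasurableSpace s) ≤ ν.caratheodory := by
    rintro _ ⟨E, hE, rfl⟩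
    refine (OuterMeasure.isCaratheodory_iff ν).2 fun t ↦ ?_
    rw [hν, hν, hν, image_inter_preimage, image_sdiff_preimage, measure_inter_add_sdiff _ hE]
  refine ⟨ν.toMeasure hcarat, Measure.ext fun E hE ↦ ?_⟩
  rw [Measure.map_apply measurable_subtype_coe hE, toMeasure_apply _ _ (measurable_subtype_coe hE),
    hν, Subtype.image_preimage_coe, Measure.restrict_apply hE, inter_comm]

theorem exists_isUniformOn01_subtype_val {S : Set ℝ} (hS : S ⊆ Icc 0 1)
    (hmeet : ∀ E, MeasurableSet E → E ⊆ Icc 0 1 → 0 < volume E → (S ∩ E).Nonempty) :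
    ∃ P : Measure S, IsProbabilityMeasure P ∧ IsUniformOn01 P Subtype.val := by
  have hfull : (volume.restrict (Icc (0 : ℝ) 1)).restrict S = volume.restrict (Icc 0 1) :=
    Measure.restrict_eq_self_of_forall_inter_nonempty fun E hE hpos ↦
      (hmeet _ (hE.inter measurableSet_Icc) inter_subset_right
        (by rwa [← Measure.restrict_apply hE])).mono (inter_subset_inter_right _ inter_subset_left)
  obtain ⟨P, hP⟩ := Measure.exists_map_subtype_val_eq_restrict (volume.restrict (Icc (0 : ℝ) 1)) S
  rw [hfull] at hP
  refine ⟨P, ⟨?_⟩, measurable_subtype_coe, by rwa [Subtype.range_coe], hP⟩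
  rw [← preimage_univ, ← Measure.map_apply measurable_subtype_coe MeasurableSet.univ, hP]
  simp

/-- For any index set `I` of cardinality at most the continuum there is a
family of uniformly distributed random variables `X α` (on probability spaces `Ω α`) with
pairwise disjoint ranges. -/
theorem stmt_3 (I : Type) (hI : Cardinal.mk I ≤ Cardinal.continuum) :
    ∃ (Ω : I → Type) (_ : ∀ α, MeasurableSpace (Ω α)) (P : ∀ α, Measure (Ω α))
      (X : ∀ α, Ω α → ℝ),
      (∀ α, IsProbabilityMeasure (P α)) ∧ (∀ α, IsUniformOn01 (P α) (X α)) ∧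
      ∀ α β, α ≠ β → Set.range (X α) ∩ Set.range (X β) = ∅ := by
  let J := {E : Set ℝ // MeasurableSet E ∧ E ⊆ Icc 0 1 ∧ 0 < volume E}
  have hcard (E : J) : #(J × I) ≤ #E.1 := calc
    #(J × I) ≤ 𝔠 * 𝔠 := by
      rw [mk_prod, lift_id, lift_id]
      exact mul_le_mul' ((mk_subtype_mono fun E hE ↦ hE.1).trans
        (MeasurableSpace.mk_setOf_measurableSet_le_continuum ℝ)) hI
    _ = 𝔠 := continuum_mul_self
    _ ≤ #E.1 := E.2.1.continuum_le_mk_of_measure_pos E.2.2.2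
  obtain ⟨S, hdisj, hsub, hmeet⟩ :=
    exists_pairwise_disjoint_forall_inter_nonempty (ι := I) (fun E : J ↦ E.1) hcard
  choose P hP hX using fun α ↦ exists_isUniformOn01_subtype_val
    ((hsub α).trans (iUnion_subset fun E ↦ E.2.2.1)) fun E hE hEI hpos ↦ hmeet α ⟨E, hE, hEI, hpos⟩
  refine ⟨fun α ↦ S α, fun _ ↦ inferInstance, P, fun _ ↦ Subtype.val, hP, hX, fun α β hαβ ↦ ?_⟩
  simpa [disjoint_iff_inter_eq_empty] using hdisj hαβ
end

section
/- There exists a family of probability spaces (Ω_α, F_α, P_α)_{α ∈ [0,1]} and uniformly distributed random variables X_α : Ω_α → [0,1] such that for all α ≠ β in [0,1], the Lebesgue inner measure of X_α(Ω_α) ∩ X_β(Ω_β) equals min(α, β) and the Lebesgue outer measure of X_α(Ω_α) ∩ X_β(Ω_β) equals max(α, β). -/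
/-!
Fix a family `(D α)_{α ∈ [0,1]}` of pairwise disjoint subsets of `ℝ`, each meeting every Borel
set of positive measure. It exists by Bernstein's transfinite construction: there are only
continuum many pairs (Borel set of positive measure, index `α`), each such Borel set has
continuum many points, so distinct points can be chosen for all pairs.

Let `X α` be the inclusion of `S α = [0, α] ∪ (D α ∩ [0, 1])`, under the trace of Lebesgue
measure. Since `D α` has full outer measure in every Borel set, `S α` has full outer measure in
`[0, 1]` and `X α` is uniform. For `α < β`, `S α ∩ S β = [0, α] ∪ (D α ∩ [0, β])`: its outer
measure is `β`, while every Borel subset of it is null outside `[0, α]`, as it misses `D β`.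
-/

open MeasureTheory Set

/-- Lebesgue inner measure of a set `S ⊆ ℝ`: the supremum of the Lebesgue measures of
Borel sets contained in `S`. -/
noncomputable def lebesgueInner (S : Set ℝ) : ENNReal :=
  ⨆ (T : Set ℝ) (_ : MeasurableSet T) (_ : T ⊆ S), volume T

open Cardinal Function

universe u

theorem exists_injective_forall_mem_of_mk_le {ι α : Type u} (F : ι → Set α)
    (hF : ∀ i, #ι ≤ #(F i)) : ∃ f : ι → α, Injective f ∧ ∀ i, f i ∈ F i := by
  obtain ⟨_, _, hι⟩ := exists_ord_eq_type_lt ι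
  -- Under a well-order of type `ord #ι`, fewer than `#ι ≤ #(F i)` indices precede any `i`.
  have hfresh : ∀ (i : ι) (g : ∀ j < i, α), ∃ x ∈ F i, ∀ j (h : j < i), g j h ≠ x := by
    intro i g
    by_contra! hcover
    have hsub : F i ⊆ range fun j : {j // j < i} => g j.1 j.2 := fun x hx => by
      obtain ⟨j, h, rfl⟩ := hcover x hx
      exact ⟨⟨j, h⟩, rfl⟩
    have hlt : #{j // j < i} < #ι := card_typein_lt (r := (· < ·)) i hι
    exact (hF i).not_gt (((mk_le_mk_of_subset hsub).trans mk_range_le).trans_lt hlt)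
  let f : ι → α := wellFounded_lt.fix fun i g => (hfresh i g).choose
  have hf : ∀ i, f i ∈ F i ∧ ∀ j < i, f j ≠ f i := fun i => by
    rw [show f i = _ from wellFounded_lt.fix_eq _ i]
    exact (hfresh i _).choose_spec
  refine ⟨f, fun i j hij => ?_, fun i => (hf i).1⟩
  rcases lt_trichotomy i j with h | h | h
  · exact absurd hij ((hf j).2 i h)
  · exact h
  · exact absurd hij.symm ((hf i).2 j h)

theorem MeasurableSpace.mk_measurableSet_le_continuum (α : Type u) [MeasurableSpace α]
    [CountablyGenerated α] : #{s : Set α // MeasurableSet s} ≤ 𝔠 := by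
  obtain ⟨b, hb, hgen⟩ := CountablyGenerated.isCountablyGenerated (α := α)
  have := cardinal_measurableSet_le_continuum (hb.le_aleph0.trans aleph0_le_continuum)
  rwa [← hgen] at this

namespace MeasureTheory

variable {α : Type*} [MeasurableSpace α]

/-- The trace of `μ` on an arbitrary set `S`. The measurable sets of `S` are the traces `S ∩ B`
of measurable sets `B`, which are Carathéodory for the outer measure of `μ`, so
`S ∩ B ↦ μ (S ∩ B)` is countably additive even when `S` is not measurable. -/
noncomputable def Measure.trace (μ : Measure α) (S : Set α) : Measure S :=
  (OuterMeasure.comap Subtype.val μ.toOuterMeasure).toMeasure <| by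
    rintro _ ⟨B, hB, rfl⟩ t
    simp only [OuterMeasure.comap_apply, coe_toOuterMeasure, image_inter_preimage,
      image_sdiff_preimage]
    exact le_toOuterMeasure_caratheodory μ B hB _

theorem Measure.trace_apply (μ : Measure α) (S : Set α) {s : Set S} (hs : MeasurableSet s) :
    μ.trace S s = μ (Subtype.val '' s) :=
  toMeasure_apply _ _ hs

theorem Measure.map_subtypeVal_trace (μ : Measure α) (S : Set α) :
    (μ.trace S).map Subtype.val = μ.restrict S := by
  ext B hB
  rw [Measure.map_apply measurable_subtype_coe hB, μ.trace_apply S (measurable_subtype_coe hB),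
    Subtype.image_preimage_coe, Measure.restrict_apply hB, inter_comm]

/-- Halmos' thick sets: sets whose complement has inner measure zero. -/
def IsThick (μ : Measure α) (D : Set α) : Prop :=
  ∀ ⦃M : Set α⦄, MeasurableSet M → μ M ≠ 0 → (D ∩ M).Nonempty

variable {μ : Measure α} {D : Set α}

theorem IsThick.measure_eq_zero (hD : IsThick μ D) {M : Set α} (hM : MeasurableSet M)
    (hDM : Disjoint D M) : μ M = 0 := by
  by_contra h
  exact (hD hM h).ne_empty hDM.inter_eq

theorem IsThick.measure_inter (hD : IsThick μ D) {M : Set α} (hM : MeasurableSet M) :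
    μ (D ∩ M) = μ M := by
  refine le_antisymm (measure_mono inter_subset_right) ?_
  set C := toMeasurable μ (D ∩ M)
  have hMC : μ (M \ C) = 0 := hD.measure_eq_zero (hM.diff (measurableSet_toMeasurable μ _))
    (disjoint_left.2 fun x hxD hx => hx.2 (subset_toMeasurable μ _ ⟨hxD, hx.1⟩))
  calc μ M ≤ μ C := measure_mono_ae (ae_le_set.2 hMC)
    _ = μ (D ∩ M) := measure_toMeasurable _

theorem IsThick.measure_union_inter (hD : IsThick μ D) {A B : Set α} (hA : MeasurableSet A)
    (hB : MeasurableSet B) : μ (A ∪ D ∩ B) = μ (A ∪ B) := by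
  have hsplit : A ∪ D ∩ B = D ∩ (B \ A) ∪ A := by
    ext x; by_cases hx : x ∈ A <;> simp [hx]
  rw [hsplit, measure_union (disjoint_sdiff_left.mono_left inter_subset_right) hA,
    union_comm A B, ← sdiff_union_self, measure_union disjoint_sdiff_left hA,
    hD.measure_inter (hB.diff hA)]

theorem IsThick.restrict_union_inter (hD : IsThick μ D) {A B : Set α} (hA : MeasurableSet A)
    (hB : MeasurableSet B) : μ.restrict (A ∪ D ∩ B) = μ.restrict (A ∪ B) := by
  ext T hT
  rw [Measure.restrict_apply hT, Measure.restrict_apply hT, inter_union_distrib_left,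
    inter_union_distrib_left, inter_left_comm, hD.measure_union_inter (hT.inter hA) (hT.inter hB)]

theorem IsThick.lebesgueInner_union_of_disjoint {D A N : Set ℝ} (hD : IsThick volume D)
    (hA : MeasurableSet A) (hN : Disjoint N D) : lebesgueInner (A ∪ N) = volume A := by
  refine le_antisymm (iSup₂_le fun T hT => iSup_le fun hTAN => ?_)
    (le_iSup₂_of_le A hA (le_iSup_of_le subset_union_left le_rfl))
  have hTA : volume (T \ A) = 0 := hD.measure_eq_zero (hT.diff hA)
    (hN.symm.mono_right fun x hx => (hTAN hx.1).resolve_left hx.2)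
  exact measure_mono_ae (ae_le_set.2 hTA)

theorem continuum_le_mk_of_measure_ne_zero {α : Type u} [MeasurableSpace α]
    [StandardBorelSpace α] {μ : Measure α} [NullSingletonClass μ] {M : Set α}
    (hM : MeasurableSet M) (hμM : μ M ≠ 0) : 𝔠 ≤ #M := by
  have := hM.standardBorel
  have hM' : ¬ Countable M := fun h => hμM ((countable_coe_iff.1 h).measure_zero μ)
  simpa using (lift_mk_eq'.2 ⟨(PolishSpace.measurableEquivNatBoolOfNotCountable hM').toEquiv⟩).ge

theorem exists_pairwise_disjoint_isThick {α ι : Type u} [MeasurableSpace α]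
    [StandardBorelSpace α] (μ : Measure α) [NullSingletonClass μ] (hι : #ι ≤ 𝔠) :
    ∃ D : ι → Set α, Pairwise (Disjoint on D) ∧ ∀ i, IsThick μ (D i) := by
  let J := {M : Set α // MeasurableSet M ∧ μ M ≠ 0} × ι
  have hJ : #J ≤ 𝔠 := by
    calc #J ≤ 𝔠 * 𝔠 := by
          rw [mk_prod, lift_id, lift_id]
          gcongr
          exact (mk_subtype_mono fun _ h => h.1).trans
            (MeasurableSpace.mk_measurableSet_le_continuum α)
      _ = 𝔠 := mul_eq_self aleph0_le_continuum
  obtain ⟨f, hf, hfM⟩ := exists_injective_forall_mem_of_mk_le (fun j : J => j.1.1)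
    fun j => hJ.trans (continuum_le_mk_of_measure_ne_zero j.1.2.1 j.1.2.2)
  refine ⟨fun i => range fun M => f (M, i), fun i i' hii' => ?_, fun i M hM hμM => ?_⟩
  · rw [onFun, disjoint_left]
    rintro _ ⟨M, rfl⟩ ⟨M', hM'⟩
    exact hii' (congrArg Prod.snd (hf hM')).symm
  · exact ⟨f (⟨M, hM, hμM⟩, i), mem_range_self _, hfM (⟨M, hM, hμM⟩, i)⟩

end MeasureTheory

section BernsteinRange

variable (D : Icc (0 : ℝ) 1 → Set ℝ)

def bernsteinRange (α : Icc (0 : ℝ) 1) : Set ℝ := Icc 0 (α : ℝ) ∪ D α ∩ Icc 0 1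

variable {D}

theorem bernsteinRange_subset (α : Icc (0 : ℝ) 1) : bernsteinRange D α ⊆ Icc 0 1 :=
  union_subset (Icc_subset_Icc_right α.2.2) inter_subset_right

theorem volume_restrict_bernsteinRange (hD : ∀ α, IsThick volume (D α)) (α : Icc (0 : ℝ) 1) :
    volume.restrict (bernsteinRange D α) = volume.restrict (Icc 0 1) := by
  rw [bernsteinRange, (hD α).restrict_union_inter measurableSet_Icc measurableSet_Icc,
    union_eq_right.2 (Icc_subset_Icc_right α.2.2)]

theorem bernsteinRange_inter_of_lt (hdisj : Pairwise (Disjoint on D)) {α β : Icc (0 : ℝ) 1}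
    (hαβ : (α : ℝ) < β) :
    bernsteinRange D α ∩ bernsteinRange D β = Icc 0 (α : ℝ) ∪ D α ∩ Icc 0 β := by
  have hDαβ := disjoint_left.1 (hdisj (Subtype.coe_ne_coe.1 hαβ.ne))
  ext x
  simp only [bernsteinRange, mem_inter_iff, mem_union, mem_Icc]
  constructor
  · rintro ⟨h | h, h' | h'⟩
    · exact Or.inl h
    · exact Or.inl h
    · exact Or.inr ⟨h.1, h'.1, h'.2⟩
    · exact absurd h'.1 (hDαβ h.1)
  · rintro (h | h)
    · exact ⟨Or.inl h, Or.inl ⟨h.1, h.2.trans hαβ.le⟩⟩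
    · exact ⟨Or.inr ⟨h.1, h.2.1, h.2.2.trans β.2.2⟩, Or.inl h.2⟩

theorem lebesgueInner_bernsteinRange_inter_of_lt (hdisj : Pairwise (Disjoint on D))
    (hD : ∀ α, IsThick volume (D α)) {α β : Icc (0 : ℝ) 1} (hαβ : (α : ℝ) < β) :
    lebesgueInner (bernsteinRange D α ∩ bernsteinRange D β) = ENNReal.ofReal α := by
  rw [bernsteinRange_inter_of_lt hdisj hαβ, (hD β).lebesgueInner_union_of_disjoint
    measurableSet_Icc ((hdisj (Subtype.coe_ne_coe.1 hαβ.ne)).mono_left inter_subset_left),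
    Real.volume_Icc, sub_zero]

theorem volume_bernsteinRange_inter_of_lt (hdisj : Pairwise (Disjoint on D))
    (hD : ∀ α, IsThick volume (D α)) {α β : Icc (0 : ℝ) 1} (hαβ : (α : ℝ) < β) :
    volume (bernsteinRange D α ∩ bernsteinRange D β) = ENNReal.ofReal β := by
  rw [bernsteinRange_inter_of_lt hdisj hαβ,
    (hD α).measure_union_inter measurableSet_Icc measurableSet_Icc,
    union_eq_right.2 (Icc_subset_Icc_right hαβ.le), Real.volume_Icc, sub_zero]

end BernsteinRange

/-- There is a family `X α`, `α ∈ [0,1]`, of uniformly distributed random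
variables such that for `α ≠ β` the intersection of the ranges of `X α` and `X β` has
Lebesgue inner measure `min α β` and Lebesgue outer measure `max α β`.
(The outer measure of an arbitrary set is its `volume` in Mathlib.) -/
theorem stmt_4 :
    ∃ (Ω : Set.Icc (0 : ℝ) 1 → Type) (_ : ∀ α, MeasurableSpace (Ω α))
      (P : ∀ α, Measure (Ω α)) (X : ∀ α, Ω α → ℝ),
      (∀ α, IsProbabilityMeasure (P α)) ∧ (∀ α, IsUniformOn01 (P α) (X α)) ∧
      ∀ α β : Set.Icc (0 : ℝ) 1, α ≠ β →
        lebesgueInner (Set.range (X α) ∩ Set.range (X β))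
            = ENNReal.ofReal (min (α : ℝ) (β : ℝ)) ∧
        volume (Set.range (X α) ∩ Set.range (X β))
            = ENNReal.ofReal (max (α : ℝ) (β : ℝ)) := by
  obtain ⟨D, hdisj, hD⟩ := exists_pairwise_disjoint_isThick (ι := Icc (0 : ℝ) 1)
    (volume : Measure ℝ) ((mk_subtype_le _).trans mk_real.le)
  have hlaw (α : Icc (0 : ℝ) 1) :
      (volume.trace (bernsteinRange D α)).map Subtype.val = volume.restrict (Icc 0 1) :=
    (volume.map_subtypeVal_trace _).trans (volume_restrict_bernsteinRange hD α)
  refine ⟨fun α => bernsteinRange D α, fun _ => inferInstance,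
    fun α => volume.trace (bernsteinRange D α), fun _ => Subtype.val, fun α => ?_,
    fun α => ⟨measurable_subtype_coe, Subtype.range_coe.trans_subset (bernsteinRange_subset α),
      hlaw α⟩, fun α β hαβ => ?_⟩
  · have : IsProbabilityMeasure ((volume.trace (bernsteinRange D α)).map Subtype.val) :=
      ⟨by simp [hlaw α]⟩
    exact Measure.isProbabilityMeasure_of_map Subtype.val
  · simp only [Subtype.range_coe]
    rcases lt_or_gt_of_ne (Subtype.coe_ne_coe.2 hαβ) with h | h
    · rw [min_eq_left h.le, max_eq_right h.le]
      exact ⟨lebesgueInner_bernsteinRange_inter_of_lt hdisj hD h,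
        volume_bernsteinRange_inter_of_lt hdisj hD h⟩
    · rw [inter_comm, min_eq_right h.le, max_eq_left h.le]
      exact ⟨lebesgueInner_bernsteinRange_inter_of_lt hdisj hD h,
        volume_bernsteinRange_inter_of_lt hdisj hD h⟩
end

section
/- A subset A of [0,1] is the range of some uniformly distributed random variable (i.e., there exist a probability space (Ω, F, P) and a uniformly distributed X : Ω → [0,1] with X(Ω) = A) if and only if A has Lebesgue outer measure 1. -/
open MeasureTheory Set

/-!
If `X` has law `λ` on `[0,1]`, every Borel set containing the range of `X` has
full `P`-measure, hence Lebesgue measure `1`. Conversely, if `λ*(A) = 1`, take `Ω = A` with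
the trace σ-algebra and `P(A ∩ B) = λ*(A ∩ B)` for Borel `B`: this is countably additive
because Borel sets are Carathéodory-measurable for `λ*`, and the inclusion `A → ℝ` then has
law `λ*(A ∩ ·) = λ([0,1] ∩ ·)`, as `A` has full outer measure in `[0,1]`.
-/

namespace MeasureTheory.Measure

variable {α : Type*} [MeasurableSpace α]

theorem comap_subtypeVal_le_caratheodory (μ : Measure α) (s : Set α) :
    (inferInstance : MeasurableSpace s) ≤
      (OuterMeasure.comap ((↑) : s → α) μ.toOuterMeasure).caratheodory := by
  rintro _ ⟨B, hB, rfl⟩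
  refine (OuterMeasure.isCaratheodory_iff _).2 fun t ↦ ?_
  simp only [OuterMeasure.comap_apply, image_inter_preimage, image_sdiff_preimage]
  exact (measure_inter_add_sdiff _ hB).symm

/-- Unlike `Measure.comap (↑) μ`, which is `0` unless `s` is null-measurable, this is
`(↑) ⁻¹' B ↦ μ (s ∩ B)` for every `s`. -/
noncomputable def trace_s5 (μ : Measure α) (s : Set α) : Measure s :=
  (OuterMeasure.comap (↑) μ.toOuterMeasure).toMeasure (comap_subtypeVal_le_caratheodory μ s)

theorem trace_apply_preimage_val (μ : Measure α) (s : Set α) {B : Set α}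
    (hB : MeasurableSet B) : μ.trace_s5 s ((↑) ⁻¹' B) = μ (s ∩ B) := by
  rw [trace_s5, toMeasure_apply _ _ (measurable_subtype_coe hB), OuterMeasure.comap_apply,
    Subtype.image_preimage_coe]
  rfl

theorem map_val_trace (μ : Measure α) (s : Set α) :
    (μ.trace_s5 s).map (↑) = μ.restrict s := by
  ext B hB
  rw [map_apply measurable_subtype_coe hB, trace_apply_preimage_val μ s hB,
    restrict_apply hB, inter_comm]

theorem restrict_eq_restrict_of_subset_of_measure_eq {μ : Measure α} {s t : Set α}
    (hst : s ⊆ t) (h : μ s = μ t) (hs : μ s ≠ ⊤) : μ.restrict s = μ.restrict t := by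
  ext B hB
  rw [restrict_apply hB, restrict_apply hB, inter_comm, inter_comm B]
  exact measure_inter_eq_of_measure_eq hB h hst hs

end MeasureTheory.Measure

/-- A subset `A` of `[0,1]` is the range of some uniformly distributed
random variable if and only if `A` has Lebesgue outer measure `1`.
(The outer measure of an arbitrary set is its `volume` in Mathlib.) -/
theorem stmt_5 (A : Set ℝ) (hA : A ⊆ Set.Icc 0 1) :
    (∃ (Ω : Type) (_ : MeasurableSpace Ω) (P : Measure Ω),
        IsProbabilityMeasure P ∧ ∃ X : Ω → ℝ, IsUniformOn01 P X ∧ Set.range X = A)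
      ↔ volume A = 1 := by
  constructor
  · rintro ⟨Ω, _, P, _, X, ⟨hX, hXA, hlaw⟩, rfl⟩
    refine le_antisymm ?_ ?_
    · simpa using measure_mono (μ := volume) hXA
    · calc 1 = P (X ⁻¹' range X) := by rw [preimage_range, measure_univ]
        _ ≤ P.map X (range X) := Measure.le_map_apply hX.aemeasurable _
        _ ≤ volume (range X) := by rw [hlaw]; exact Measure.restrict_apply_le _ _
  · intro hA1
    have hP : IsProbabilityMeasure (volume.trace_s5 A) :=
      ⟨by simpa [hA1] using volume.trace_apply_preimage_val A MeasurableSet.univ⟩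
    refine ⟨A, inferInstance, volume.trace_s5 A, hP, (↑), ⟨measurable_subtype_coe, ?_, ?_⟩,
      Subtype.range_coe⟩
    · rwa [Subtype.range_coe]
    · rw [Measure.map_val_trace, Measure.restrict_eq_restrict_of_subset_of_measure_eq hA
        (by simp [hA1]) (by simp [hA1])]
end

section
/- Let ζ be an irrational real number, B_e = {n + mζ : n, m ∈ ℤ, n even}, and B_o = {n + mζ : n, m ∈ ℤ, n odd}. Let C ⊆ ℝ contain exactly one representative of each equivalence class of the relation x ∼ y ⟺ x − y ∈ {n + mζ : n, m ∈ ℤ}, and set M = C + B_e = {c + b : c ∈ C, b ∈ B_e}. Then the difference set D(M) = {m₁ − m₂ : m₁, m₂ ∈ M} is disjoint from B_o, and ℝ \ M = M + 1. -/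
/-!
Write `H = ℤ + ℤζ` and `K = 2ℤ + ℤζ`, an index-two subgroup of `H`; since `ζ` is irrational the
representation `n + mζ` is unique, so `B_o = H \ K` and `B_o = K + 1`. Each `x` lies in exactly
one coset `c + H` with `c ∈ C`, and `M` meets that coset in `c + K`. Two points of `M` whose
difference lies in `H` therefore have the same representative, so their difference lies in `K`;
and `x ∉ M` means `x - c ∈ H \ K = K + 1`, i.e. `x - 1 ∈ M`.
-/

open Set
open scoped Pointwise

section Transversal

variable {G : Type*} [AddCommGroup G] {H K : AddSubgroup G} {C : Set G}

theorem eq_of_sub_mem_of_transversal (hC : ∀ x, ∃! c, c ∈ C ∧ x - c ∈ H) {c₁ c₂ : G}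
    (h₁ : c₁ ∈ C) (h₂ : c₂ ∈ C) (h : c₁ - c₂ ∈ H) : c₁ = c₂ :=
  (hC c₁).unique ⟨h₁, by simp⟩ ⟨h₂, h⟩

theorem sub_mem_of_mem_transversal_add (hC : ∀ x, ∃! c, c ∈ C ∧ x - c ∈ H) (hKH : K ≤ H)
    {x y : G} (hx : x ∈ C + (K : Set G)) (hy : y ∈ C + (K : Set G)) (hxy : x - y ∈ H) :
    x - y ∈ K := by
  obtain ⟨c₁, hc₁, k₁, hk₁, rfl⟩ := hx
  obtain ⟨c₂, hc₂, k₂, hk₂, rfl⟩ := hy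
  have hc : c₁ = c₂ := by
    refine eq_of_sub_mem_of_transversal hC hc₁ hc₂ ?_
    have hdecomp : c₁ - c₂ = (c₁ + k₁ - (c₂ + k₂)) - (k₁ - k₂) := by abel
    rw [hdecomp]
    exact H.sub_mem hxy (hKH (K.sub_mem hk₁ hk₂))
  subst hc
  simpa only [add_sub_add_left_eq_sub] using K.sub_mem hk₁ hk₂

theorem compl_transversal_add_eq_image_add (hC : ∀ x, ∃! c, c ∈ C ∧ x - c ∈ H) (hKH : K ≤ H)
    {t : G} (htH : t ∈ H) (htK : t ∉ K) (hsub : ∀ h ∈ H, h ∉ K → h - t ∈ K) :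
    (C + (K : Set G))ᶜ = (· + t) '' (C + (K : Set G)) := by
  ext x
  obtain ⟨c, ⟨hc, hxc⟩, -⟩ := hC x
  constructor
  · intro hx
    have hxcK : x - c ∉ K := fun h ↦ hx ⟨c, hc, x - c, h, add_sub_cancel _ _⟩
    exact ⟨x - t, ⟨c, hc, x - c - t, hsub _ hxc hxcK, by abel_nf⟩, sub_add_cancel _ _⟩
  · rintro ⟨y, hy, rfl⟩ hyt
    have hdiff : y + t - y ∈ K :=
      sub_mem_of_mem_transversal_add hC hKH hyt hy (by simpa only [add_sub_cancel_left] using htH)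
    exact htK (by simpa only [add_sub_cancel_left] using hdiff)

end Transversal

theorem Irrational.eq_of_intCast_add_intCast_mul_eq {ζ : ℝ} (hζ : Irrational ζ) {n m n' m' : ℤ}
    (h : (n : ℝ) + m * ζ = n' + m' * ζ) : n = n' := by
  obtain rfl | hm := eq_or_ne m m'
  · exact_mod_cast add_right_cancel h
  · refine absurd ?_ ((hζ.intCast_mul (sub_ne_zero.2 hm)).ne_int (n' - n))
    push_cast
    linarith

def intLattice (ζ : ℝ) : AddSubgroup ℝ where
  carrier := {x | ∃ n m : ℤ, x = n + m * ζ}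
  zero_mem' := ⟨0, 0, by simp⟩
  add_mem' := by
    rintro _ _ ⟨n, m, rfl⟩ ⟨n', m', rfl⟩
    exact ⟨n + n', m + m', by push_cast; ring⟩
  neg_mem' := by
    rintro _ ⟨n, m, rfl⟩
    exact ⟨-n, -m, by push_cast; ring⟩

def evenIntLattice (ζ : ℝ) : AddSubgroup ℝ where
  carrier := {x | ∃ n m : ℤ, Even n ∧ x = n + m * ζ}
  zero_mem' := ⟨0, 0, Even.zero, by simp⟩
  add_mem' := by
    rintro _ _ ⟨n, m, hn, rfl⟩ ⟨n', m', hn', rfl⟩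
    exact ⟨n + n', m + m', hn.add hn', by push_cast; ring⟩
  neg_mem' := by
    rintro _ ⟨n, m, hn, rfl⟩
    exact ⟨-n, -m, hn.neg, by push_cast; ring⟩

theorem evenIntLattice_le_intLattice (ζ : ℝ) : evenIntLattice ζ ≤ intLattice ζ := by
  rintro _ ⟨n, m, -, rfl⟩
  exact ⟨n, m, rfl⟩

theorem intCast_add_intCast_mul_notMem_evenIntLattice {ζ : ℝ} (hζ : Irrational ζ) {n : ℤ}
    (hn : Odd n) (m : ℤ) : (n : ℝ) + m * ζ ∉ evenIntLattice ζ := by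
  rintro ⟨n', m', hn', h⟩
  exact Int.not_even_iff_odd.2 hn (hζ.eq_of_intCast_add_intCast_mul_eq h ▸ hn')

theorem sub_one_mem_evenIntLattice {ζ x : ℝ} (hx : x ∈ intLattice ζ) (hx' : x ∉ evenIntLattice ζ) :
    x - 1 ∈ evenIntLattice ζ := by
  obtain ⟨n, m, rfl⟩ := hx
  have hn : Odd n := Int.not_even_iff_odd.1 fun hn ↦ hx' ⟨n, m, hn, rfl⟩
  exact ⟨n - 1, m, hn.sub_odd odd_one, by push_cast; ring⟩

/-- Let `ζ` be irrational, `B = {n + mζ}`, `B_e = {n + mζ : n even}`,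
`B_o = {n + mζ : n odd}`. Let `C` contain exactly one representative of each equivalence
class of `x ∼ y ↔ x - y ∈ B`, and set `M = C + B_e`. Then the difference set of `M` is
disjoint from `B_o`, and `ℝ \ M = M + 1`. -/
theorem stmt_13 (ζ : ℝ) (hζ : Irrational ζ)
    (B Be Bo : Set ℝ)
    (hB : B = {x : ℝ | ∃ n m : ℤ, x = n + m * ζ})
    (hBe : Be = {x : ℝ | ∃ n m : ℤ, Even n ∧ x = n + m * ζ})
    (hBo : Bo = {x : ℝ | ∃ n m : ℤ, Odd n ∧ x = n + m * ζ})
    (C : Set ℝ) (hC : ∀ x : ℝ, ∃! c, c ∈ C ∧ x - c ∈ B)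
    (M : Set ℝ) (hM : M = {x : ℝ | ∃ c ∈ C, ∃ b ∈ Be, x = c + b}) :
    {x : ℝ | ∃ m₁ ∈ M, ∃ m₂ ∈ M, x = m₁ - m₂} ∩ Bo = ∅ ∧
    Mᶜ = (fun m : ℝ => m + 1) '' M := by
  have hH : B = intLattice ζ := hB
  have hK : Be = evenIntLattice ζ := hBe
  have hMadd : M = C + Be := by
    ext x
    simp only [hM, Set.mem_add, mem_ofPred_eq, eq_comm]
  subst hH hK hMadd
  have hKH := evenIntLattice_le_intLattice ζ
  constructor
  · refine eq_empty_of_forall_notMem ?_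
    rintro _ ⟨⟨m₁, h₁, m₂, h₂, rfl⟩, hodd⟩
    obtain ⟨n, m, hn, hnm⟩ := hBo ▸ hodd
    refine intCast_add_intCast_mul_notMem_evenIntLattice hζ hn m (hnm ▸ ?_)
    exact sub_mem_of_mem_transversal_add hC hKH h₁ h₂ ⟨n, m, hnm⟩
  · have h1K : (1 : ℝ) ∉ evenIntLattice ζ := by
      simpa using intCast_add_intCast_mul_notMem_evenIntLattice hζ odd_one 0
    exact compl_transversal_add_eq_image_add hC hKH ⟨1, 0, by simp⟩ h1K
      fun _ ↦ sub_one_mem_evenIntLattice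
end
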